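/- Let I be an ideal on ω. Then the diameter of SL(I) in the dual norm, sup{‖f − g‖ : f, g ∈ SL(I)}, equals 2 if and only if I is not a maximal ideal; if I is maximal, SL(I) is a singleton. -/

import Mathlib

open Filter Topology
set_option synthInstance.maxHeartbeats 400000

noncomputable section

abbrev LInf : Type := lp (fun _ : ℕ => ℝ) (⊤ : ENNReal)

def indic (A : Set ℕ) : LInf :=
  ⟨A.indicator (fun _ => (1:ℝ)), memℓp_infty ⟨1, by
    rintro r ⟨n, rfl⟩
    by_cases h : n ∈ A <;> simp [Set.indicator, h]⟩⟩

def IsIdealOmega (I : Set (Set ℕ)) : Prop :=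
  (∀ A B : Set ℕ, A ∈ I → B ⊆ A → B ∈ I) ∧
  (∀ A B : Set ℕ, A ∈ I → B ∈ I → A ∪ B ∈ I) ∧
  (Set.univ : Set ℕ) ∉ I ∧
  (∀ A : Set ℕ, A.Finite → A ∈ I)

def SLI (I : Set (Set ℕ)) : Set (LInf →L[ℝ] ℝ) :=
  {f | (∀ x : LInf, (∀ n, 0 ≤ x n) → 0 ≤ f x) ∧
       (∀ (x : LInf) (a : ℝ), Tendsto (fun n => x n) atTop (𝓝 a) → f x = a) ∧
       (∀ A ∈ I, f (indic A) = 0)}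

def UltI (I : Set (Set ℕ)) : Set (Ultrafilter ℕ) :=
  {F | (↑F : Filter ℕ) ≤ cofinite ∧ ∀ A ∈ I, Aᶜ ∈ F}

def IClusterPoint (I : Set (Set ℕ)) (x : ℕ → ℝ) (η : ℝ) : Prop :=
  ∀ ε > 0, {n | |x n - η| ≤ ε} ∉ I

def IConv (I : Set (Set ℕ)) (x : ℕ → ℝ) (η : ℝ) : Prop :=
  ∀ ε > 0, {n | ε ≤ |x n - η|} ∈ I

def eone : LInf := indic Set.univ

lemma abs_coe_le (x : LInf) (n : ℕ) : |x n| ≤ ‖x‖ :=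
  lp.norm_apply_le_norm ENNReal.top_ne_zero x n


def ulim (F : Ultrafilter ℕ) (x : LInf) : ℝ :=
  limUnder (F : Filter ℕ) (fun n => x n)

lemma tendsto_ulim (F : Ultrafilter ℕ) (x : LInf) :
    Tendsto (fun n => (x n : ℝ)) F (𝓝 (ulim F x)) := by
  have hmem : ∀ n, (x n : ℝ) ∈ Set.Icc (-‖x‖) ‖x‖ := fun n => by
    have := abs_coe_le x n
    constructor <;> [linarith [neg_abs_le (x n)]; linarith [le_abs_self (x n)]]
  obtain ⟨a, -, ha⟩ := isCompact_Icc.ultrafilter_le_nhds (F.map fun n => x n)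
    (le_principal_iff.mpr (Ultrafilter.mem_map.mpr (by exact Filter.univ_mem' hmem)))
  have h2 : Tendsto (fun n => (x n : ℝ)) F (𝓝 a) := ha
  rw [ulim, h2.limUnder_eq]; exact h2

lemma ulim_eq (F : Ultrafilter ℕ) (x : LInf) {a : ℝ}
    (h : Tendsto (fun n => (x n : ℝ)) F (𝓝 a)) : ulim F x = a :=
  tendsto_nhds_unique (tendsto_ulim F x) h

def ulimCLM (F : Ultrafilter ℕ) : LInf →L[ℝ] ℝ :=
  LinearMap.mkContinuous
    { toFun := ulim F
      map_add' := fun x y => ulim_eq F (x + y) (by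
        have : (fun n => ((x + y) n : ℝ)) = fun n => x n + y n := by
          funext n; rw [lp.coeFn_add]; rfl
        rw [this]
        exact ((tendsto_ulim F x).add (tendsto_ulim F y)))
      map_smul' := fun c x => ulim_eq F (c • x) (by
        have : (fun n => ((c • x) n : ℝ)) = fun n => c * x n := by
          funext n; rw [lp.coeFn_smul]; rfl
        rw [this]
        exact ((tendsto_ulim F x).const_mul c)) }
    1 (fun x => by
      have h1 : |ulim F x| ≤ ‖x‖ := by
        have : Tendsto (fun n => |(x n : ℝ)|) F (𝓝 |ulim F x|) :=
          (tendsto_ulim F x).abs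
        exact le_of_tendsto this (Eventually.of_forall fun n => abs_coe_le x n)
      simpa using h1)

lemma ulimCLM_apply (F : Ultrafilter ℕ) (x : LInf) : ulimCLM F x = ulim F x := rfl

def dualF (I : Set (Set ℕ)) (hI : IsIdealOmega I) : Filter ℕ where
  sets := {B | Bᶜ ∈ I}
  univ_sets := by simpa using hI.2.2.2 ∅ Set.finite_empty
  sets_of_superset := fun h hsub => hI.1 _ _ h (Set.compl_subset_compl.mpr hsub)
  inter_sets := fun hA hB => by
    simp only [Set.mem_setOf_eq, Set.compl_inter] at *
    exact hI.2.1 _ _ hA hB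

lemma mem_dualF {I : Set (Set ℕ)} (hI : IsIdealOmega I) {B : Set ℕ} :
    B ∈ dualF I hI ↔ Bᶜ ∈ I := Iff.rfl

instance dualF_neBot (I : Set (Set ℕ)) (hI : IsIdealOmega I) : NeBot (dualF I hI) := by
  refine ⟨fun h => hI.2.2.1 ?_⟩
  have : (∅ : Set ℕ) ∈ dualF I hI := h ▸ mem_bot
  simpa [mem_dualF hI] using this

lemma dualF_le_cofinite (I : Set (Set ℕ)) (hI : IsIdealOmega I) :
    dualF I hI ≤ cofinite := fun B hB => (mem_dualF hI).mpr (hI.2.2.2 _ hB)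

lemma ulimCLM_mem_SLI {I : Set (Set ℕ)} (hI : IsIdealOmega I) (F : Ultrafilter ℕ)
    (hF : (↑F : Filter ℕ) ≤ dualF I hI) : ulimCLM F ∈ SLI I := by
  have hcof : (↑F : Filter ℕ) ≤ cofinite := hF.trans (dualF_le_cofinite I hI)
  refine ⟨fun x hx => ?_, fun x a hx => ?_, fun A hA => ?_⟩
  · exact ge_of_tendsto (tendsto_ulim F x) (Eventually.of_forall hx)
  · exact ulim_eq F x (hx.mono_left (by rwa [← Nat.cofinite_eq_atTop]))
  · refine ulim_eq F (indic A) ?_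
    have hAc : Aᶜ ∈ F := hF ((mem_dualF hI).mpr (by simpa using hA))
    have : ∀ᶠ n in (F : Filter ℕ), (indic A n : ℝ) = 0 :=
      eventually_of_mem hAc (fun n hn => by
        simp [indic, Set.indicator, Set.notMem_of_mem_compl hn])
    exact Tendsto.congr' (this.mono fun n h => h.symm) tendsto_const_nhds

lemma SLI_eone {I : Set (Set ℕ)} {f : LInf →L[ℝ] ℝ} (hf : f ∈ SLI I) : f eone = 1 := by
  refine hf.2.1 eone 1 ?_
  have : ∀ n, (eone n : ℝ) = 1 := fun n => by simp [eone, indic]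
  simp only [this]; exact tendsto_const_nhds

lemma SLI_key {I : Set (Set ℕ)} (hI : IsIdealOmega I) {f : LInf →L[ℝ] ℝ} (hf : f ∈ SLI I)
    (y : LInf) (A : Set ℕ) (hA : A ∈ I) (ε : ℝ) (hε : 0 ≤ ε)
    (hy : ∀ n, n ∉ A → |y n| ≤ ε) : |f y| ≤ ε := by
  have key : ∀ z : LInf, (∀ n, n ∉ A → |z n| ≤ ε) → f z ≤ ε := by
    intro z hz
    have hpos : 0 ≤ f (ε • eone + ‖z‖ • indic A - z) := by
      refine hf.1 _ fun n => ?_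
      have h1 : (ε • eone + ‖z‖ • indic A - z) n
          = ε * (eone n) + ‖z‖ * (indic A n) - z n := by
        rw [lp.coeFn_sub, lp.coeFn_add, lp.coeFn_smul, lp.coeFn_smul]; rfl
      rw [h1]
      have he : (eone n : ℝ) = 1 := by simp [eone, indic]
      by_cases hn : n ∈ A
      · have hi : (indic A n : ℝ) = 1 := by simp [indic, Set.indicator, hn]
        have := abs_coe_le z n
        rw [he, hi]
        nlinarith [le_abs_self (z n)]
      · have hi : (indic A n : ℝ) = 0 := by simp [indic, Set.indicator, hn]
        have := hz n hn
        rw [he, hi]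
        nlinarith [le_abs_self (z n)]
    have hcalc : f (ε • eone + ‖z‖ • indic A - z) = ε - f z := by
      rw [map_sub, map_add, map_smul, map_smul, SLI_eone hf, hf.2.2 A hA]
      simp
    linarith [hcalc ▸ hpos]
  have h1 := key y hy
  have h2 := key (-y) (fun n hn => by
    have : ((-y : LInf) n : ℝ) = -(y n) := by rw [lp.coeFn_neg]; rfl
    rw [this, abs_neg]; exact hy n hn)
  rw [map_neg] at h2
  rw [abs_le]; constructor <;> linarith

lemma SLI_norm_le {I : Set (Set ℕ)} (hI : IsIdealOmega I) {f : LInf →L[ℝ] ℝ}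
    (hf : f ∈ SLI I) : ‖f‖ ≤ 1 := by
  refine f.opNorm_le_bound zero_le_one fun x => ?_
  rw [one_mul, Real.norm_eq_abs]
  exact SLI_key hI hf x ∅ (hI.2.2.2 ∅ Set.finite_empty) ‖x‖ (norm_nonneg x)
    (fun n _ => abs_coe_le x n)

lemma maximal_singleton {I : Set (Set ℕ)} (hI : IsIdealOmega I)
    (hmax : ∀ A : Set ℕ, A ∈ I ∨ Aᶜ ∈ I) : ∃ f : LInf →L[ℝ] ℝ, SLI I = {f} := by
  set F : Ultrafilter ℕ := Ultrafilter.of (dualF I hI) with hFdef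
  have hFle : (↑F : Filter ℕ) ≤ dualF I hI := Ultrafilter.of_le _
  refine ⟨ulimCLM F, Set.eq_singleton_iff_unique_mem.mpr
    ⟨ulimCLM_mem_SLI hI F hFle, fun g hg => ?_⟩⟩
  refine ContinuousLinearMap.ext fun x => ?_
  set η := ulim F x with hη
  have key : ∀ ε : ℝ, 0 < ε → |g x - η| ≤ ε := by
    intro ε hε
    set A : Set ℕ := {n | ε ≤ |x n - η|} with hAdef
    have hA : A ∈ I := by
      rcases hmax A with h | h
      · exact h
      · exfalso
        have hAF : A ∈ F := hFle ((mem_dualF hI).mpr h)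
        have hAcF : Aᶜ ∈ F := by
          have : {n : ℕ | |x n - η| < ε} ∈ F := by
            have htd : Tendsto (fun n => (x n : ℝ) - η) F (𝓝 0) := by
              have := (tendsto_ulim F x).sub_const η
              rwa [← hη, sub_self] at this
            have := htd.abs
            simpa using this (gt_mem_nhds (by simpa using hε))
          exact mem_of_superset this (fun n hn => by
            simp only [Set.mem_compl_iff, hAdef, Set.mem_setOf_eq, not_le]
            exact hn)
        have := F.inter_mem hAF hAcF
        simp at this
    have hyc : ∀ n, n ∉ A → |((x - η • eone : LInf) n : ℝ)| ≤ ε := by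
      intro n hn
      have h1 : ((x - η • eone : LInf) n : ℝ) = x n - η * eone n := by
        rw [lp.coeFn_sub, lp.coeFn_smul]; rfl
      have he : (eone n : ℝ) = 1 := by simp [eone, indic]
      rw [h1, he, mul_one]
      simp only [hAdef, Set.mem_setOf_eq, not_le] at hn
      exact hn.le
    have := SLI_key hI hg (x - η • eone) A hA ε hε.le hyc
    rwa [map_sub, map_smul, SLI_eone hg, smul_eq_mul, mul_one] at this
  have h0 : g x - η = 0 := by
    by_contra h
    have hpos : 0 < |g x - η| := abs_pos.mpr h
    have := key (|g x - η| / 2) (by linarith)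
    linarith
  have : g x = η := by linarith [h0]
  rw [this]; rfl

set_option maxHeartbeats 1000000 in
theorem stmt10 (I : Set (Set ℕ)) (hI : IsIdealOmega I) :
    (Metric.diam (SLI I) = 2 ↔ ¬ (∀ A : Set ℕ, A ∈ I ∨ Aᶜ ∈ I)) ∧
    ((∀ A : Set ℕ, A ∈ I ∨ Aᶜ ∈ I) → ∃ f : LInf →L[ℝ] ℝ, SLI I = {f}) := by
  have hbdd : Bornology.IsBounded (SLI I) := by
    refine (Metric.isBounded_closedBall (x := (0 : LInf →L[ℝ] ℝ)) (r := 1)).subset ?_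
    intro f hf
    simpa [Metric.mem_closedBall, dist_zero_right] using SLI_norm_le hI hf
  refine ⟨⟨fun hd hmax => ?_, fun hmax => ?_⟩, maximal_singleton hI⟩
  · obtain ⟨f, hf⟩ := maximal_singleton hI hmax
    rw [hf, Metric.diam_singleton] at hd
    norm_num at hd
  · push_neg at hmax
    obtain ⟨A, hA, hAc⟩ := hmax
    have hnb1 : NeBot (dualF I hI ⊓ 𝓟 A) := by
      rw [Filter.inf_principal_neBot_iff]
      intro U hU
      by_contra hne
      rw [Set.not_nonempty_iff_eq_empty] at hne
      exact hA (hI.1 _ _ ((mem_dualF hI).mp hU)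
        (fun n hn hnU => Set.eq_empty_iff_forall_notMem.mp hne n ⟨hnU, hn⟩))
    have hnb2 : NeBot (dualF I hI ⊓ 𝓟 Aᶜ) := by
      rw [Filter.inf_principal_neBot_iff]
      intro U hU
      by_contra hne
      rw [Set.not_nonempty_iff_eq_empty] at hne
      exact hAc (hI.1 _ _ ((mem_dualF hI).mp hU)
        (fun n hn hnU => Set.eq_empty_iff_forall_notMem.mp hne n ⟨hnU, hn⟩))
    set F : Ultrafilter ℕ := @Ultrafilter.of _ _ hnb1 with hF
    set G : Ultrafilter ℕ := @Ultrafilter.of _ _ hnb2 with hG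
    have hFle : (↑F : Filter ℕ) ≤ dualF I hI ⊓ 𝓟 A := Ultrafilter.of_le _
    have hGle : (↑G : Filter ℕ) ≤ dualF I hI ⊓ 𝓟 Aᶜ := Ultrafilter.of_le _
    have hfmem := ulimCLM_mem_SLI hI F (hFle.trans inf_le_left)
    have hgmem := ulimCLM_mem_SLI hI G (hGle.trans inf_le_left)
    set x : LInf := (2:ℝ) • indic A - eone with hx
    have hxc : ∀ n, (x n : ℝ) = 2 * indic A n - eone n := by
      intro n; rw [hx, lp.coeFn_sub, lp.coeFn_smul]; rfl
    have he : ∀ n, (eone n : ℝ) = 1 := fun n => by simp [eone, indic]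
    have hxA : ∀ n ∈ A, (x n : ℝ) = 1 := by
      intro n hn; rw [hxc, he]; simp [indic, Set.indicator, hn]; norm_num
    have hxAc : ∀ n ∉ A, (x n : ℝ) = -1 := by
      intro n hn; rw [hxc, he]; simp [indic, Set.indicator, hn]
    have hxnorm : ‖x‖ ≤ 1 := by
      refine lp.norm_le_of_forall_le zero_le_one fun n => ?_
      rw [Real.norm_eq_abs]
      by_cases hn : n ∈ A
      · rw [hxA n hn]; simp
      · rw [hxAc n hn]; simp
    have hAF : A ∈ F := le_principal_iff.mp (hFle.trans inf_le_right)
    have hAG : Aᶜ ∈ G := le_principal_iff.mp (hGle.trans inf_le_right)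
    have hfx : ulimCLM F x = 1 :=
      ulim_eq F x (Tendsto.congr'
        (eventually_of_mem hAF fun n hn => (hxA n hn).symm) tendsto_const_nhds)
    have hgx : ulimCLM G x = -1 :=
      ulim_eq G x (Tendsto.congr'
        (eventually_of_mem hAG fun n hn => (hxAc n hn).symm) tendsto_const_nhds)
    have hdistge : (2:ℝ) ≤ dist (ulimCLM F) (ulimCLM G) := by
      have h1 := (ulimCLM F - ulimCLM G).le_opNorm x
      rw [ContinuousLinearMap.sub_apply, hfx, hgx] at h1
      norm_num [Real.norm_eq_abs] at h1
      have h3 := mul_le_mul_of_nonneg_left hxnorm (norm_nonneg (ulimCLM F - ulimCLM G))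
      rw [dist_eq_norm]
      linarith
    refine le_antisymm ?_ ?_
    · refine Metric.diam_le_of_forall_dist_le (by norm_num) fun f hf g hg => ?_
      rw [dist_eq_norm]
      calc ‖f - g‖ ≤ ‖f‖ + ‖g‖ := norm_sub_le f g
        _ ≤ 1 + 1 := add_le_add (SLI_norm_le hI hf) (SLI_norm_le hI hg)
        _ = 2 := by norm_num
    · exact hdistge.trans (Metric.dist_le_diam_of_mem hbdd hfmem hgmem)
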